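/- arXiv:2011.03700 — 4 statements merged into one kernel-verified Lean document; each statement's English description precedes it below -/
import Mathlib

section
/- Let p be a prime, let a be a primitive root modulo p, let ξ be a p-th root of unity with ξ ≠ 1, and let η be a (p−1)-th root of unity. Then Q(η, ξ) = Σ_{i=0}^{p−2} η^i · ξ^{a^i mod p} is nonzero. -/
/-!
Let `χ` be the multiplicative character of `𝔽_p` with `χ a = η`, and `ψ x = ξ ^ x` the additive
character attached to `ξ`. Since `a` is a primitive root, `i ↦ a ^ i` runs once through `𝔽_p^×`
for `i < p - 1`, so the sum is the Gauss sum `g(χ, ψ)`. This is `-1` when `χ` is trivial, and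
otherwise `g(χ, ψ) g(χ⁻¹, ψ⁻¹) = p ≠ 0`.
-/

open Finset

section Generator

variable {G₀ : Type*} [CommGroupWithZero G₀] [Fintype G₀] {g : G₀}
  (hg : orderOf g = Fintype.card G₀ - 1)
include hg

theorem ne_zero_of_orderOf_eq_card_sub_one : g ≠ 0 := by
  have hpos : 0 < orderOf g := by
    have := Fintype.one_lt_card (α := G₀)
    omega
  rintro rfl
  have h01 := pow_orderOf_eq_one (0 : G₀)
  rw [zero_pow hpos.ne'] at h01
  exact zero_ne_one h01

theorem injOn_pow_range_card_sub_one : Set.InjOn (g ^ ·) (range (Fintype.card G₀ - 1)) := by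
  rw [coe_range, ← hg]
  exact pow_injOn_Iio_orderOf

theorem image_range_pow_eq_univ_erase_zero [DecidableEq G₀] :
    (range (Fintype.card G₀ - 1)).image (g ^ ·) = univ.erase 0 := by
  refine eq_of_subset_of_card_le (fun x hx => ?_) ?_
  · obtain ⟨i, -, rfl⟩ := mem_image.mp hx
    exact mem_erase.mpr ⟨pow_ne_zero i (ne_zero_of_orderOf_eq_card_sub_one hg), mem_univ _⟩
  · rw [card_image_of_injOn (injOn_pow_range_card_sub_one hg), card_range,
      card_erase_of_mem (mem_univ 0), card_univ]

theorem sum_range_pow_eq_sum {M : Type*} [AddCommMonoid M] {f : G₀ → M} (hf : f 0 = 0) :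
    ∑ i ∈ range (Fintype.card G₀ - 1), f (g ^ i) = ∑ x, f x := by
  classical
  rw [← sum_image (injOn_pow_range_card_sub_one hg), image_range_pow_eq_univ_erase_zero hg,
    sum_erase _ hf]

theorem exists_mulChar_apply_pow {R : Type*} [CommMonoidWithZero R] {η : R}
    (hη : η ^ (Fintype.card G₀ - 1) = 1) : ∃ χ : MulChar G₀ R, ∀ i : ℕ, χ (g ^ i) = η ^ i := by
  classical
  let u : G₀ˣ := Units.mk0 g (ne_zero_of_orderOf_eq_card_sub_one hg)
  have hcard : Fintype.card G₀ˣ = Fintype.card G₀ - 1 := Fintype.card_units G₀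
  have hu : ∀ x, x ∈ Subgroup.zpowers u := by
    have : Subgroup.zpowers u = ⊤ := Subgroup.eq_top_of_card_eq _ <| by
      rw [Nat.card_zpowers, ← orderOf_units, Units.val_mk0, hg, Nat.card_eq_fintype_card, hcard]
    simp [this]
  have hηu : IsUnit η := IsUnit.of_pow_eq_one hη (by rw [← hcard]; exact Fintype.card_ne_zero)
  have hroot : hηu.unit ∈ rootsOfUnity (Fintype.card G₀ˣ) R := by
    rw [mem_rootsOfUnity, hcard]
    exact Units.ext (by simpa using hη)
  refine ⟨MulChar.ofRootOfUnity hroot hu, fun i => ?_⟩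
  rw [show g ^ i = (u : G₀) ^ i from rfl, map_pow, MulChar.ofRootOfUnity_spec]
  simp

end Generator

theorem gaussSum_ne_zero {R R' : Type*} [Field R] [Fintype R] [CommRing R'] [IsDomain R']
    (h : (Fintype.card R : R') ≠ 0) (χ : MulChar R R') {ψ : AddChar R R'} (hψ : ψ ≠ 1) :
    gaussSum χ ψ ≠ 0 := by
  by_cases hχ : χ = 1
  · simp [hχ, gaussSum_one_left hψ]
  · exact gaussSum_ne_zero_of_nontrivial h hχ (AddChar.IsPrimitive.of_ne_one hψ)

theorem AddChar.zmodChar_ne_one {C : Type*} [CommMonoid C] {n : ℕ} [NeZero n] {ζ : C}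
    (hζ : ζ ^ n = 1) (hζ1 : ζ ≠ 1) : zmodChar n hζ ≠ 1 :=
  ne_one_iff.mpr ⟨(1 : ℕ), by rwa [zmodChar_apply', pow_one]⟩

theorem stmt7 (p a : ℕ) (hp : p.Prime) (ha : orderOf (a : ZMod p) = p - 1)
    (ξ η : ℂ) (hξ : ξ ^ p = 1) (hξ1 : ξ ≠ 1) (hη : η ^ (p - 1) = 1) :
    ∑ i ∈ Finset.range (p - 1), η ^ i * ξ ^ (a ^ i % p) ≠ 0 := by
  have : Fact p.Prime := ⟨hp⟩
  have hcard : p - 1 = Fintype.card (ZMod p) - 1 := by rw [ZMod.card]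
  rw [hcard] at ha hη ⊢
  obtain ⟨χ, hχ⟩ := exists_mulChar_apply_pow ha hη
  let ψ := AddChar.zmodChar p hξ
  have hψ : ∀ i : ℕ, ψ ((a : ZMod p) ^ i) = ξ ^ (a ^ i % p) := fun i => by
    rw [← Nat.cast_pow, AddChar.zmodChar_apply, ZMod.val_natCast]
  have hsum : ∑ i ∈ range (Fintype.card (ZMod p) - 1), η ^ i * ξ ^ (a ^ i % p)
      = gaussSum χ ψ := by
    rw [gaussSum, ← sum_range_pow_eq_sum ha (by simp only [MulChar.map_zero, zero_mul])]
    simp only [hχ, hψ]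
  rw [hsum]
  exact gaussSum_ne_zero (by simp [hp.ne_zero]) χ (AddChar.zmodChar_ne_one hξ hξ1)
end

section
/- Let p be a prime and let D = ℤ_p. Every function f: D^k → ℝ can be written as a real linear combination f = γ_1 g_1 + ... + γ_s g_s, where each g_i: D^k → ℝ is either the constant function 1 or a function of the form x ↦ (α_1 x_1 ⊕ ... ⊕ α_ℓ x_ℓ ⊕ x_{ℓ+1} ⊕ β) for some ℓ < k, coefficients α_i ∈ ℤ_p, and β ∈ {0,...,p−2}, with the mod-p value interpreted as a real number in {0,...,p−1}. -/
open Finset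

set_option linter.unusedSectionVars false
set_option maxHeartbeats 1000000

section Aux
variable {p k : ℕ} [Fact p.Prime] [NeZero p]

lemma val_neg_one' : ((-1 : ZMod p)).val = p - 1 := by
  obtain ⟨m, rfl⟩ : ∃ m, p = m + 1 := ⟨p - 1, (Nat.succ_pred_eq_of_pos (Fact.out : p.Prime).pos).symm⟩
  simp [ZMod.val_neg_one]

lemma val_succ {z : ZMod p} (hz : z ≠ -1) : (z + 1).val = z.val + 1 := by
  have h1 : (1 : ZMod p).val = 1 := ZMod.val_one_eq_one_mod p ▸ Nat.mod_eq_of_lt (Fact.out : p.Prime).one_lt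
  have hlt : z.val + 1 < p := by
    have := z.val_lt
    rcases Nat.lt_or_ge (z.val + 1) p with h | h
    · exact h
    · exfalso; apply hz; apply ZMod.val_injective
      rw [val_neg_one']; omega
  rw [ZMod.val_add, h1, Nat.mod_eq_of_lt hlt]

lemma sum_val_shift (c : ZMod p) : ∑ β : ZMod p, ((c + β).val : ℝ) = ∑ d : ZMod p, (d.val : ℝ) :=
  Fintype.sum_equiv (Equiv.addLeft c) _ _ (fun _ => rfl)

lemma ind_eq (y d : ZMod p) :
    (if y = d then (p : ℝ) else 0) = ((y + (-1 - d)).val : ℝ) - ((y + (-d)).val : ℝ) + 1 := by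
  by_cases h : y = d
  · subst h
    have h1 : y + (-1 - y) = -1 := by ring
    have h2 : y + (-y) = 0 := by ring
    rw [if_pos rfl, h1, h2, val_neg_one', ZMod.val_zero]
    have := (Fact.out : p.Prime).two_le
    push_cast; rw [Nat.cast_sub (by omega)]; push_cast; ring
  · rw [if_neg h]
    have hz : y + (-1 - d) ≠ -1 := fun hc => h (by linear_combination hc)
    have h2 : y + (-d) = (y + (-1 - d)) + 1 := by ring
    rw [h2, val_succ hz]
    push_cast; ring

def Sset (p k : ℕ) [NeZero p] : Set ((Fin k → ZMod p) → ℝ) :=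
  ({g | g = fun _ => (1 : ℝ)} ∪
    {g | ∃ ℓ : ℕ, ∃ hℓ : ℓ < k, ∃ α : Fin ℓ → ZMod p, ∃ β : ZMod p,
      β.val < p - 1 ∧
      g = fun x =>
        ((((∑ i, α i * x (Fin.castLE hℓ.le i)) + x ⟨ℓ, hℓ⟩ + β).val : ℕ) : ℝ)})

noncomputable abbrev V (p k : ℕ) [NeZero p] : Submodule ℝ ((Fin k → ZMod p) → ℝ) :=
  Submodule.span ℝ (Sset p k)

lemma one_mem' : (fun _ => (1 : ℝ)) ∈ V p k :=
  Submodule.subset_span (Or.inl rfl)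

lemma gen_mem {ℓ : ℕ} (hℓ : ℓ < k) (α : Fin ℓ → ZMod p) {β : ZMod p} (hβ : β.val < p - 1) :
    (fun x : Fin k → ZMod p =>
      ((((∑ i, α i * x (Fin.castLE hℓ.le i)) + x ⟨ℓ, hℓ⟩ + β).val : ℕ) : ℝ)) ∈ V p k :=
  Submodule.subset_span (Or.inr ⟨ℓ, hℓ, α, β, hβ, rfl⟩)

lemma gen_mem' {ℓ : ℕ} (hℓ : ℓ < k) (α : Fin ℓ → ZMod p) (β : ZMod p) :
    (fun x : Fin k → ZMod p =>
      ((((∑ i, α i * x (Fin.castLE hℓ.le i)) + x ⟨ℓ, hℓ⟩ + β).val : ℕ) : ℝ)) ∈ V p k := by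
  by_cases hβ : β.val < p - 1
  · exact gen_mem hℓ α hβ
  · have hβ' : β = -1 := by
      apply ZMod.val_injective
      have := β.val_lt
      rw [val_neg_one']; omega
    subst hβ'
    have key : (fun x : Fin k → ZMod p =>
        ((((∑ i, α i * x (Fin.castLE hℓ.le i)) + x ⟨ℓ, hℓ⟩ + (-1 : ZMod p)).val : ℕ) : ℝ))
      = (∑ d : ZMod p, (d.val : ℝ)) • (fun _ => (1 : ℝ)) -
        ∑ β' ∈ univ.erase (-1 : ZMod p), (fun x : Fin k → ZMod p =>
          ((((∑ i, α i * x (Fin.castLE hℓ.le i)) + x ⟨ℓ, hℓ⟩ + β').val : ℕ) : ℝ)) := by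
      funext x
      have := sum_val_shift (p := p) ((∑ i, α i * x (Fin.castLE hℓ.le i)) + x ⟨ℓ, hℓ⟩)
      rw [← Finset.sum_erase_add _ _ (mem_univ (-1 : ZMod p))] at this
      simp only [Pi.sub_apply, Pi.smul_apply, Finset.sum_apply, smul_eq_mul, mul_one]
      linarith
    rw [key]
    refine Submodule.sub_mem _ (Submodule.smul_mem _ _ one_mem') (Submodule.sum_mem _ fun β' hβ' => ?_)
    apply gen_mem hℓ α
    have hne : β' ≠ -1 := (Finset.mem_erase.1 hβ').1
    have h1 := β'.val_lt
    have : β'.val ≠ p - 1 := fun h => hne (by apply ZMod.val_injective; rw [val_neg_one', h])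
    omega

lemma ind_canon {ℓ : ℕ} (hℓ : ℓ < k) (α : Fin ℓ → ZMod p) (d : ZMod p) :
    (fun x : Fin k → ZMod p =>
      if (∑ i, α i * x (Fin.castLE hℓ.le i)) + x ⟨ℓ, hℓ⟩ = d then (p : ℝ) else 0) ∈ V p k := by
  have key : (fun x : Fin k → ZMod p =>
      if (∑ i, α i * x (Fin.castLE hℓ.le i)) + x ⟨ℓ, hℓ⟩ = d then (p : ℝ) else 0)
    = (fun x : Fin k → ZMod p =>
        ((((∑ i, α i * x (Fin.castLE hℓ.le i)) + x ⟨ℓ, hℓ⟩ + (-1 - d)).val : ℕ) : ℝ))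
      - (fun x : Fin k → ZMod p =>
        ((((∑ i, α i * x (Fin.castLE hℓ.le i)) + x ⟨ℓ, hℓ⟩ + (-d)).val : ℕ) : ℝ))
      + (fun _ => (1 : ℝ)) := by
    funext x
    exact ind_eq _ d
  rw [key]
  exact Submodule.add_mem _ (Submodule.sub_mem _ (gen_mem' hℓ α _) (gen_mem' hℓ α _)) one_mem'

-- general nonzero linear form: rewrite sum in canonical form
lemma sum_split {t : Fin k → ZMod p} (ℓF : Fin k) (hmax : ∀ i, ℓF < i → t i = 0)
    (x : Fin k → ZMod p) :
    ∑ i, t i * x i =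
      (∑ i : Fin (ℓF : ℕ), t (Fin.castLE ℓF.isLt.le i) * x (Fin.castLE ℓF.isLt.le i))
        + t ℓF * x ℓF := by
  set ℓ := (ℓF : ℕ) with hℓdef
  have hℓ : ℓ < k := ℓF.isLt
  have h : ∀ n : ℕ, ∀ hn : n < k, ℓ < n → t ⟨n, hn⟩ * x ⟨n, hn⟩ = 0 := by
    intro n hn hln
    rw [hmax ⟨n, hn⟩ (by simpa [Fin.lt_def] using hln), zero_mul]
  calc ∑ i, t i * x i = ∑ i : Fin k, (fun n : ℕ => if hn : n < k then t ⟨n, hn⟩ * x ⟨n, hn⟩ else 0) (i : ℕ) := by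
        apply Finset.sum_congr rfl; intro i _
        simp [Fin.eta]
    _ = ∑ n ∈ range k, (fun n : ℕ => if hn : n < k then t ⟨n, hn⟩ * x ⟨n, hn⟩ else 0) n :=
        Fin.sum_univ_eq_sum_range (fun n : ℕ => if hn : n < k then t ⟨n, hn⟩ * x ⟨n, hn⟩ else 0) k
    _ = ∑ n ∈ range (ℓ + 1), (fun n : ℕ => if hn : n < k then t ⟨n, hn⟩ * x ⟨n, hn⟩ else 0) n := by
        symm
        apply Finset.sum_subset (Finset.range_subset_range.2 hℓ)
        intro n hn hn'
        simp only [mem_range] at hn hn'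
        rcases Nat.lt_or_ge n k with h2 | h2
        · rw [dif_pos h2]; exact h n h2 (by omega)
        · rw [dif_neg (by omega)]
    _ = (∑ n ∈ range ℓ, (fun n : ℕ => if hn : n < k then t ⟨n, hn⟩ * x ⟨n, hn⟩ else 0) n)
          + (if hn : ℓ < k then t ⟨ℓ, hn⟩ * x ⟨ℓ, hn⟩ else 0) := Finset.sum_range_succ _ _
    _ = (∑ i : Fin ℓ, t (Fin.castLE hℓ.le i) * x (Fin.castLE hℓ.le i)) + t ℓF * x ℓF := by
        congr 1
        · rw [← Fin.sum_univ_eq_sum_range]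
          apply Finset.sum_congr rfl; intro i _
          have : (i : ℕ) < k := lt_of_lt_of_le i.isLt hℓ.le
          rw [dif_pos this]
          rfl
        · exact dif_pos hℓ

lemma ind_general {t : Fin k → ZMod p} (ht : t ≠ 0) (d : ZMod p) :
    (fun x : Fin k → ZMod p => if (∑ i, t i * x i) = d then (p : ℝ) else 0) ∈ V p k := by
  have hne : (univ.filter (fun i => t i ≠ 0)).Nonempty := by
    obtain ⟨j, hj⟩ := Function.ne_iff.1 ht
    exact ⟨j, by simp only [mem_filter, mem_univ, true_and]; exact fun h => hj (by rw [h]; rfl)⟩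
  set ℓF := (univ.filter (fun i => t i ≠ 0)).max' hne with hℓF
  have hu : t ℓF ≠ 0 := (Finset.mem_filter.1 (Finset.max'_mem _ hne)).2
  have hmax : ∀ i, ℓF < i → t i = 0 := by
    intro i hi
    by_contra h
    have hmem : i ∈ univ.filter (fun j => t j ≠ 0) := Finset.mem_filter.2 ⟨mem_univ i, h⟩
    have := Finset.le_max' _ i hmem
    exact absurd hi (not_lt.2 this)
  set ℓ := (ℓF : ℕ)
  have hℓ : ℓ < k := ℓF.isLt
  set u := t ℓF with hudef
  set α : Fin ℓ → ZMod p := fun i => u⁻¹ * t (Fin.castLE hℓ.le i) with hα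
  have hℓF' : (⟨ℓ, hℓ⟩ : Fin k) = ℓF := Fin.ext rfl
  have key : ∀ x : Fin k → ZMod p,
      ((∑ i, t i * x i) = d) ↔ ((∑ i, α i * x (Fin.castLE hℓ.le i)) + x ⟨ℓ, hℓ⟩ = u⁻¹ * d) := by
    intro x
    have hsum : (∑ i, α i * x (Fin.castLE hℓ.le i)) + x ⟨ℓ, hℓ⟩ = u⁻¹ * ∑ i, t i * x i := by
      rw [sum_split ℓF hmax x, mul_add, Finset.mul_sum, hℓF']
      congr 1
      · apply Finset.sum_congr rfl; intro i _; rw [hα]; ring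
      · rw [← mul_assoc, inv_mul_cancel₀ hu, one_mul]
    rw [hsum]
    constructor
    · intro h; rw [h]
    · intro h; exact mul_left_cancel₀ (inv_ne_zero hu) h
  have : (fun x : Fin k → ZMod p => if (∑ i, t i * x i) = d then (p : ℝ) else 0)
      = (fun x : Fin k → ZMod p =>
          if (∑ i, α i * x (Fin.castLE hℓ.le i)) + x ⟨ℓ, hℓ⟩ = u⁻¹ * d then (p : ℝ) else 0) := by
    funext x
    exact if_congr (key x) rfl rfl
  rw [this]
  exact ind_canon hℓ α _

lemma val_general {t : Fin k → ZMod p} (ht : t ≠ 0) (β : ZMod p) :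
    (fun x : Fin k → ZMod p => (((∑ i, t i * x i) + β).val : ℝ)) ∈ V p k := by
  have hp : (p : ℝ) ≠ 0 := Nat.cast_ne_zero.2 (NeZero.ne p)
  have key : (fun x : Fin k → ZMod p => (((∑ i, t i * x i) + β).val : ℝ))
      = ∑ d : ZMod p, ((d.val : ℝ) / p) •
          (fun x : Fin k → ZMod p => if (∑ i, t i * x i) = d - β then (p : ℝ) else 0) := by
    funext x
    simp only [Finset.sum_apply, Pi.smul_apply, smul_eq_mul, mul_ite, mul_zero]
    have : ∀ d : ZMod p, ((∑ i, t i * x i) = d - β) ↔ (d = (∑ i, t i * x i) + β) := by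
      intro d; exact eq_sub_iff_add_eq.trans eq_comm
    rw [Finset.sum_congr rfl (fun d _ => if_congr (this d) rfl rfl),
      Finset.sum_ite_eq' univ ((∑ i, t i * x i) + β) (fun d => (d.val : ℝ) / p * p)]
    rw [if_pos (mem_univ _), div_mul_cancel₀ _ hp]
  rw [key]
  exact Submodule.sum_mem _ fun d _ => Submodule.smul_mem _ _ (ind_general ht _)

lemma card_pi_ne (j : Fin k) : Fintype.card ({j' : Fin k // j' ≠ j} → ZMod p) = p ^ (k - 1) := by
  rw [Fintype.card_fun, ZMod.card]
  congr 1
  have : Fintype.card {j' : Fin k // j' ≠ j} = Fintype.card {j' : Fin k // ¬ (j' = j)} := rfl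
  rw [this, Fintype.card_subtype_compl, Fintype.card_subtype_eq, Fintype.card_fin]

lemma sum_eval (j : Fin k) (g : ZMod p → ℝ) :
    ∑ t : Fin k → ZMod p, g (t j) = (p : ℝ) ^ (k - 1) * ∑ c : ZMod p, g c := by
  have h := Fintype.sum_equiv (Equiv.funSplitAt j (ZMod p)) (fun t => g (t j)) (fun q => g q.1)
    (fun t => rfl)
  rw [h, Fintype.sum_prod_type]
  simp only [Finset.sum_const, Finset.card_univ, nsmul_eq_mul, card_pi_ne j]
  rw [← Finset.mul_sum]
  push_cast
  ring

lemma counting {y : Fin k → ZMod p} (hy : y ≠ 0) :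
    ∑ t : Fin k → ZMod p, (((∑ i, t i * y i).val : ℕ) : ℝ)
      = (p : ℝ) ^ (k - 1) * ∑ c : ZMod p, ((c.val : ℕ) : ℝ) := by
  obtain ⟨j, hj0⟩ := Function.ne_iff.1 hy
  have hj : y j ≠ 0 := fun h => hj0 (by rw [h]; rfl)
  set E : (Fin k → ZMod p) → ZMod p := fun t => ∑ i ∈ univ.erase j, t i * y i with hE
  have hEup : ∀ (t : Fin k → ZMod p) (c : ZMod p), E (Function.update t j c) = E t := by
    intro t c
    apply Finset.sum_congr rfl
    intro i hi
    rw [Function.update_of_ne (Finset.mem_erase.1 hi).1]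
  set σ : (Fin k → ZMod p) → (Fin k → ZMod p) :=
    fun t => Function.update t j ((y j)⁻¹ * (t j - E t)) with hσ
  set τ : (Fin k → ZMod p) → (Fin k → ZMod p) :=
    fun t => Function.update t j (y j * t j + E t) with hτ
  have hστ : ∀ t, σ (τ t) = t := by
    intro t; funext i
    by_cases hij : i = j
    · subst hij
      simp only [hσ, hτ, Function.update_self, hEup]
      rw [add_sub_cancel_right, ← mul_assoc, inv_mul_cancel₀ hj, one_mul]
    · simp only [hσ, hτ, Function.update_of_ne hij]
  have hτσ : ∀ t, τ (σ t) = t := by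
    intro t; funext i
    by_cases hij : i = j
    · subst hij
      simp only [hσ, hτ, Function.update_self, hEup]
      rw [← mul_assoc, mul_inv_cancel₀ hj, one_mul, sub_add_cancel]
    · simp only [hσ, hτ, Function.update_of_ne hij]
  have heq : ∀ t, ∑ i, (σ t) i * y i = t j := by
    intro t
    rw [← Finset.sum_erase_add _ _ (mem_univ j)]
    have h1 : ∑ i ∈ univ.erase j, (σ t) i * y i = E t := by
      apply Finset.sum_congr rfl; intro i hi
      simp only [hσ, Function.update_of_ne (Finset.mem_erase.1 hi).1]
    have h2 : (σ t) j = (y j)⁻¹ * (t j - E t) := Function.update_self _ _ _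
    rw [h1, h2, mul_comm ((y j)⁻¹) _, mul_assoc, inv_mul_cancel₀ hj, mul_one,
      add_sub_cancel]
  let e : (Fin k → ZMod p) ≃ (Fin k → ZMod p) := ⟨σ, τ, hτσ, hστ⟩
  have := (Equiv.sum_comp e (fun t => (((∑ i, t i * y i).val : ℕ) : ℝ))).symm
  rw [this]
  have : ∀ t, ((((∑ i, (e t) i * y i).val : ℕ) : ℝ)) = (((t j).val : ℕ) : ℝ) := by
    intro t
    have : e t = σ t := rfl
    rw [this, heq]
  rw [Finset.sum_congr rfl (fun t _ => this t)]
  exact sum_eval j (fun c => ((c.val : ℕ) : ℝ))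

lemma delta_mem (a : Fin k → ZMod p) :
    (fun x : Fin k → ZMod p =>
      if x = a then ((p : ℝ) ^ (k - 1) * ∑ c : ZMod p, ((c.val : ℕ) : ℝ)) else 0) ∈ V p k := by
  set M := (p : ℝ) ^ (k - 1) * ∑ c : ZMod p, ((c.val : ℕ) : ℝ) with hMdef
  have key : (fun x : Fin k → ZMod p => if x = a then M else 0)
      = M • (fun _ => (1 : ℝ)) - ∑ t : Fin k → ZMod p,
          (fun x : Fin k → ZMod p => ((((∑ i, t i * x i) + (- ∑ i, t i * a i)).val : ℕ) : ℝ)) := by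
    funext x
    simp only [Pi.sub_apply, Pi.smul_apply, Finset.sum_apply, smul_eq_mul, mul_one]
    by_cases hxa : x = a
    · subst hxa
      rw [if_pos rfl]
      have hz : ∀ t : Fin k → ZMod p,
          ((((∑ i, t i * x i) + (- ∑ i, t i * x i)).val : ℕ) : ℝ) = 0 := by
        intro t
        rw [add_neg_cancel, ZMod.val_zero, Nat.cast_zero]
      rw [Finset.sum_congr rfl (fun t _ => hz t), Finset.sum_const, smul_zero, sub_zero]
    · rw [if_neg hxa]
      have hy : x - a ≠ 0 := sub_ne_zero.2 hxa
      have hrw : ∀ t : Fin k → ZMod p,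
          (∑ i, t i * x i) + (- ∑ i, t i * a i) = ∑ i, t i * (x - a) i := by
        intro t
        simp only [Pi.sub_apply, mul_sub, Finset.sum_sub_distrib]
        ring
      have : ∀ t : Fin k → ZMod p,
          ((((∑ i, t i * x i) + (- ∑ i, t i * a i)).val : ℕ) : ℝ)
            = (((∑ i, t i * (x - a) i).val : ℕ) : ℝ) := by
        intro t; rw [hrw t]
      rw [Finset.sum_congr rfl (fun t _ => this t), counting hy, ← hMdef, sub_self]
  rw [key]
  refine Submodule.sub_mem _ (Submodule.smul_mem _ _ one_mem') (Submodule.sum_mem _ fun t _ => ?_)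
  by_cases ht : t = 0
  · subst ht
    have hz : (fun x : Fin k → ZMod p =>
        ((((∑ i, (0 : Fin k → ZMod p) i * x i) + (- ∑ i, (0 : Fin k → ZMod p) i * a i)).val : ℕ) : ℝ))
        = 0 := by
      funext x
      simp
    rw [hz]
    exact Submodule.zero_mem _
  · exact val_general ht _

/-- Every real function on (ℤ_p)^k is a real linear combination of the constant 1
and mod-p linear expressions α₁x₁ ⊕ ⋯ ⊕ α_ℓ x_ℓ ⊕ x_{ℓ+1} ⊕ β (β ∈ {0,…,p−2}),
values interpreted via canonical representatives. -/
theorem stmt9 (p k : ℕ) [Fact p.Prime] [NeZero p] (f : (Fin k → ZMod p) → ℝ) :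
    f ∈ Submodule.span ℝ
      (({g | g = fun _ => (1 : ℝ)} ∪
        {g | ∃ ℓ : ℕ, ∃ hℓ : ℓ < k, ∃ α : Fin ℓ → ZMod p, ∃ β : ZMod p,
          β.val < p - 1 ∧
          g = fun x =>
            ((((∑ i, α i * x (Fin.castLE hℓ.le i)) + x ⟨ℓ, hℓ⟩ + β).val : ℕ) : ℝ)}) :
        Set ((Fin k → ZMod p) → ℝ)) := by
  show f ∈ V p k
  have hplt : (1 : ℕ) < p := (Fact.out : p.Prime).one_lt
  haveI : Fact (1 < p) := ⟨hplt⟩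
  have hSg : (1 : ℝ) ≤ ∑ c : ZMod p, ((c.val : ℕ) : ℝ) := by
    have h1 : (((1 : ZMod p).val : ℕ) : ℝ) = 1 := by rw [ZMod.val_one]; norm_num
    calc (1 : ℝ) = (((1 : ZMod p).val : ℕ) : ℝ) := h1.symm
      _ ≤ ∑ c : ZMod p, ((c.val : ℕ) : ℝ) :=
        Finset.single_le_sum (f := fun c : ZMod p => ((c.val : ℕ) : ℝ))
          (fun c _ => by positivity) (mem_univ (1 : ZMod p))
  have hppow : (0 : ℝ) < (p : ℝ) ^ (k - 1) := by positivity
  set M := (p : ℝ) ^ (k - 1) * ∑ c : ZMod p, ((c.val : ℕ) : ℝ) with hMdef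
  have hM : M ≠ 0 := ne_of_gt (mul_pos hppow (lt_of_lt_of_le one_pos hSg))
  have key : f = ∑ a : Fin k → ZMod p, (f a / M) •
      (fun x : Fin k → ZMod p => if x = a then M else 0) := by
    funext x
    simp only [Finset.sum_apply, Pi.smul_apply, smul_eq_mul, mul_ite, mul_zero]
    rw [Finset.sum_ite_eq univ x (fun a => f a / M * M), if_pos (mem_univ x),
      div_mul_cancel₀ _ hM]
  rw [key]
  exact Submodule.sum_mem _ fun a _ => Submodule.smul_mem _ _ (delta_mem a)
end Aux
end

section
/- Let p be a prime and k ≥ 1. The family 𝓕_{k−1} consisting of the constant function 1 together with all functions (ℤ_p)^k → ℂ of the form x ↦ (α_1 x_1 ⊕ ... ⊕ α_ℓ x_ℓ ⊕ x_{ℓ+1} ⊕ β) for 0 ≤ ℓ ≤ k−1, α_i ∈ ℤ_p, β ∈ {0,...,p−2} (values interpreted as complex numbers via the representatives {0,...,p−1}) is linearly independent over ℂ, and hence forms a basis of the p^k-dimensional space of functions from (ℤ_p)^k to ℂ. -/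
/-!
Every additive character `x ↦ e(a ⬝ᵥ x)` of `(ℤ_p)^k` is a function of a single form
`α₁x₁ + ⋯ + α_ℓ x_ℓ + x_{ℓ+1}` (divide `a` by its last nonzero entry), and in one variable the
functions `t ↦ (t + β).val` together with `1` span everything, because
`(t - c - 1).val - (t - c).val + 1 = p · [t = c]`. Hence the family spans the character space,
which is all of `(ℤ_p)^k → ℂ`; as it has `1 + ∑_{ℓ<k} p^ℓ (p - 1) = p^k` members, it is a basis.
-/

open Finset Set Submodule

section OneVariable

variable {p : ℕ} [NeZero p]

def valShift (β : ZMod p) (t : ZMod p) : ℂ := ((t + β).val : ℂ)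

def valShiftSet (p : ℕ) : Set (ZMod p → ℂ) :=
  insert 1 (valShift '' {β | β.val < p - 1})

lemma sum_valShift : ∑ β, valShift β = fun _ : ZMod p => ∑ s : ZMod p, (s.val : ℂ) := by
  ext t
  rw [Finset.sum_apply]
  exact Fintype.sum_equiv (Equiv.addLeft t) _ _ fun _ => rfl

lemma valShift_mem_span (β : ZMod p) : valShift β ∈ span ℂ (valShiftSet p) := by
  have hsmall : ∀ β : ZMod p, β.val < p - 1 → valShift β ∈ span ℂ (valShiftSet p) :=
    fun β hβ => subset_span (mem_insert_of_mem _ ⟨β, hβ, rfl⟩)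
  by_cases hβ : β.val < p - 1
  · exact hsmall β hβ
  -- the one missing shift is recovered from the sum of all shifts, which is constant
  have hsum : ∑ β', valShift β' ∈ span ℂ (valShiftSet p) := by
    rw [sum_valShift, show (fun _ => ∑ s : ZMod p, (s.val : ℂ)) = (∑ s : ZMod p, (s.val : ℂ)) • 1
      from funext fun _ => (mul_one _).symm]
    exact smul_mem _ _ (subset_span (mem_insert _ _))
  rw [← Finset.add_sum_erase _ _ (mem_univ β)] at hsum
  refine (Submodule.add_mem_iff_left _ (sum_mem fun β' hβ' => hsmall β' ?_)).mp hsum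
  have hne : β'.val ≠ β.val := fun h => (Finset.mem_erase.mp hβ').1 (ZMod.val_injective p h)
  have := β'.val_lt
  have := β.val_lt
  omega

lemma valShift_sub_valShift_add_one (c : ZMod p) :
    valShift (-1 - c) - valShift (-c) + 1 = Pi.single c (p : ℂ) := by
  ext t
  have hval := ZMod.cast_sub_one (R := ℂ) (t - c)
  rw [ZMod.cast_eq_val, ZMod.cast_eq_val] at hval
  rw [Pi.add_apply, Pi.sub_apply, Pi.one_apply, valShift, valShift,
    show t + (-1 - c) = t - c - 1 by ring, ← sub_eq_add_neg, hval, Pi.single_apply]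
  split_ifs with h₀ h₁ h₁
  · simp [h₀]
  · exact absurd (sub_eq_zero.mp h₀) h₁
  · exact absurd (sub_eq_zero.mpr h₁) h₀
  · ring

lemma span_valShiftSet : span ℂ (valShiftSet p) = ⊤ := by
  rw [eq_top_iff, ← (Pi.basisFun ℂ (ZMod p)).span_eq, span_le]
  rintro _ ⟨c, rfl⟩
  have hp : (p : ℂ) ≠ 0 := Nat.cast_ne_zero.mpr (NeZero.ne p)
  have : Pi.basisFun ℂ (ZMod p) c = (p : ℂ)⁻¹ • Pi.single c (p : ℂ) := by
    rw [Pi.basisFun_apply, ← Pi.single_smul, smul_eq_mul, inv_mul_cancel₀ hp]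
  rw [this, ← valShift_sub_valShift_add_one]
  exact smul_mem _ _ (add_mem (sub_mem (valShift_mem_span _) (valShift_mem_span _))
    (subset_span (mem_insert _ _)))

end OneVariable

section MonicForm

variable {R : Type*} [Semiring R]

def monicForm {k : ℕ} (ℓ : Fin k) (α : Fin ℓ → R) (x : Fin k → R) : R :=
  ∑ i, α i * x (Fin.castLE ℓ.isLt.le i) + x ℓ

theorem exists_dotProduct_eq_mul_monicForm {F : Type*} [Field F] :
    ∀ {k : ℕ} (a : Fin k → F), a ≠ 0 →
      ∃ (ℓ : Fin k) (α : Fin ℓ → F) (c : F), ∀ x, a ⬝ᵥ x = c * monicForm ℓ α x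
  | 0, a, ha => absurd (Subsingleton.elim a 0) ha
  | n + 1, a, ha => by
    by_cases hlast : a (Fin.last n) = 0
    · have hinit : a ∘ Fin.castSucc ≠ 0 := by
        intro h
        exact ha (funext fun i => Fin.lastCases hlast (fun j => congrFun h j) i)
      obtain ⟨ℓ, α, c, h⟩ := exists_dotProduct_eq_mul_monicForm _ hinit
      refine ⟨ℓ.castSucc, α, c, fun x => ?_⟩
      rw [dotProduct, Fin.sum_univ_castSucc, hlast, zero_mul, add_zero]
      exact h (x ∘ Fin.castSucc)
    · refine ⟨Fin.last n, fun i => a i.castSucc / a (Fin.last n), a (Fin.last n), fun x => ?_⟩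
      rw [dotProduct, Fin.sum_univ_castSucc, monicForm, mul_add, Finset.mul_sum]
      congr 1
      refine Finset.sum_congr rfl fun i _ => ?_
      field_simp
      rfl

end MonicForm

section DotChar

variable {N k : ℕ} [NeZero N]

noncomputable def dotChar (a : Fin k → ZMod N) : AddChar (Fin k → ZMod N) ℂ where
  toFun x := ZMod.stdAddChar (a ⬝ᵥ x)
  map_zero_eq_one' := by simp
  map_add_eq_mul' x y := by rw [dotProduct_add, AddChar.map_add_eq_mul]

lemma dotChar_apply (a x : Fin k → ZMod N) : dotChar a x = ZMod.stdAddChar (a ⬝ᵥ x) := rfl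

lemma dotChar_injective : Function.Injective (dotChar : (Fin k → ZMod N) → _) := by
  intro a b h
  funext i
  have := DFunLike.congr_fun h (Pi.single i 1)
  rwa [dotChar_apply, dotChar_apply, dotProduct_single_one, dotProduct_single_one,
    ZMod.injective_stdAddChar.eq_iff] at this

lemma dotChar_surjective : Function.Surjective (dotChar : (Fin k → ZMod N) → _) :=
  ((Fintype.bijective_iff_injective_and_card _).mpr
    ⟨dotChar_injective, (AddChar.card_eq (α := Fin k → ZMod N)).symm⟩).2

lemma span_range_dotChar :
    span ℂ (range fun a : Fin k → ZMod N => ⇑(dotChar a)) = ⊤ := by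
  rw [← (AddChar.complexBasis (Fin k → ZMod N)).span_eq, AddChar.coe_complexBasis,
    ← dotChar_surjective.range_comp]
  rfl

end DotChar

section ValFamily

variable (p k : ℕ)

-- `b : Fin (p - 1)` stands for the shift `β ∈ {0, …, p - 2}`
abbrev ValFamilyIndex := Option (Σ ℓ : Fin k, (Fin ℓ → ZMod p) × Fin (p - 1))

def valFamily : ValFamilyIndex p k → (Fin k → ZMod p) → ℂ
  | none => 1
  | some ⟨ℓ, α, b⟩ => valShift ((b : ℕ) : ZMod p) ∘ monicForm ℓ α

variable {p k} [Fact p.Prime]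

lemma comp_monicForm_mem_span (ℓ : Fin k) (α : Fin ℓ → ZMod p) (h : ZMod p → ℂ) :
    h ∘ monicForm ℓ α ∈ span ℂ (range (valFamily p k)) := by
  have hh : h ∈ span ℂ (valShiftSet p) := span_valShiftSet (p := p) ▸ mem_top
  refine span_mono ?_ (apply_mem_span_image_of_mem_span (LinearMap.funLeft ℂ ℂ (monicForm ℓ α)) hh)
  rintro _ ⟨g, hg | ⟨β, hβ, rfl⟩, rfl⟩
  · exact ⟨none, by rw [hg]; rfl⟩
  · exact ⟨some ⟨ℓ, α, ⟨β.val, hβ⟩⟩, by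
      simp only [valFamily, ZMod.natCast_zmod_val]; rfl⟩

lemma dotChar_mem_span (a : Fin k → ZMod p) : ⇑(dotChar a) ∈ span ℂ (range (valFamily p k)) := by
  by_cases ha : a = 0
  · refine subset_span ⟨none, funext fun x => ?_⟩
    simp [valFamily, dotChar_apply, ha]
  obtain ⟨ℓ, α, c, hc⟩ := exists_dotProduct_eq_mul_monicForm a ha
  convert comp_monicForm_mem_span ℓ α fun t => ZMod.stdAddChar (c * t)
  funext x
  rw [dotChar_apply, hc, Function.comp_apply]

lemma span_range_valFamily : span ℂ (range (valFamily p k)) = ⊤ := by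
  rw [eq_top_iff, ← span_range_dotChar, span_le]
  rintro _ ⟨a, rfl⟩
  exact dotChar_mem_span a

lemma card_valFamilyIndex : Fintype.card (ValFamilyIndex p k) = p ^ k := by
  have hp : p - 1 + 1 = p := Nat.sub_add_cancel (Fact.out : p.Prime).one_le
  simp only [Fintype.card_option, Fintype.card_sigma, Fintype.card_prod, Fintype.card_fun,
    ZMod.card, Fintype.card_fin]
  rw [Fin.sum_univ_eq_sum_range (fun ℓ => p ^ ℓ * (p - 1)), ← Finset.sum_mul]
  conv_lhs => enter [1, 1, 2, ℓ]; rw [← hp]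
  rw [geom_sum_mul_add, hp]

lemma linearIndependent_valFamily : LinearIndependent ℂ (valFamily p k) :=
  linearIndependent_of_top_le_span_of_card_eq_finrank span_range_valFamily.ge <| by
    rw [card_valFamilyIndex, Module.finrank_fintype_fun_eq_card, Fintype.card_fun, ZMod.card,
      Fintype.card_fin]

lemma range_valFamily : range (valFamily p k) = {g | g = fun _ => (1 : ℂ)} ∪
    {g | ∃ ℓ : ℕ, ∃ hℓ : ℓ < k, ∃ α : Fin ℓ → ZMod p, ∃ β : ZMod p, β.val < p - 1 ∧
      g = fun x => ((((∑ i, α i * x (Fin.castLE hℓ.le i)) + x ⟨ℓ, hℓ⟩ + β).val : ℕ) : ℂ)} := by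
  ext g
  constructor
  · rintro ⟨none | ⟨ℓ, α, b⟩, rfl⟩
    · exact Or.inl rfl
    · refine Or.inr ⟨ℓ, ℓ.isLt, α, (b : ℕ), ?_, rfl⟩
      rw [ZMod.val_cast_of_lt (b.isLt.trans_le (Nat.sub_le p 1))]
      exact b.isLt
  · rintro (rfl | ⟨ℓ, hℓ, α, β, hβ, rfl⟩)
    · exact ⟨none, rfl⟩
    · refine ⟨some ⟨⟨ℓ, hℓ⟩, α, ⟨β.val, hβ⟩⟩, ?_⟩
      simp only [valFamily, ZMod.natCast_zmod_val]
      rfl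

end ValFamily

theorem stmt10_general (p k : ℕ) [Fact p.Prime]
    (G : Set ((Fin k → ZMod p) → ℂ))
    (hG : G = {g | g = fun _ => (1 : ℂ)} ∪
        {g | ∃ ℓ : ℕ, ∃ hℓ : ℓ < k, ∃ α : Fin ℓ → ZMod p, ∃ β : ZMod p,
          β.val < p - 1 ∧
          g = fun x =>
            ((((∑ i, α i * x (Fin.castLE hℓ.le i)) + x ⟨ℓ, hℓ⟩ + β).val : ℕ) : ℂ)}) :
    LinearIndependent ℂ (fun g : G => (g : (Fin k → ZMod p) → ℂ)) ∧
    Submodule.span ℂ G = ⊤ := by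
  rw [← range_valFamily] at hG
  subst hG
  exact ⟨linearIndependent_valFamily.linearIndepOn_id, span_range_valFamily⟩

/-- The family 𝓕_{k-1} (constant 1 together with all mod-p expressions
α₁x₁ ⊕ ⋯ ⊕ α_ℓ x_ℓ ⊕ x_{ℓ+1} ⊕ β with β ∈ {0,…,p−2}, viewed as ℂ-valued
functions) is linearly independent and spans the space of functions (ℤ_p)^k → ℂ. -/
theorem stmt10 (p k : ℕ) [Fact p.Prime] [NeZero p] (hk : 1 ≤ k)
    (G : Set ((Fin k → ZMod p) → ℂ))
    (hG : G = {g | g = fun _ => (1 : ℂ)} ∪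
        {g | ∃ ℓ : ℕ, ∃ hℓ : ℓ < k, ∃ α : Fin ℓ → ZMod p, ∃ β : ZMod p,
          β.val < p - 1 ∧
          g = fun x =>
            ((((∑ i, α i * x (Fin.castLE hℓ.le i)) + x ⟨ℓ, hℓ⟩ + β).val : ℕ) : ℂ)}) :
    LinearIndependent ℂ (fun g : G => (g : (Fin k → ZMod p) → ℂ)) ∧
    Submodule.span ℂ G = ⊤ :=
  stmt10_general p k G hG
end

section
/- Let M be a square complex matrix whose first row and first column are entirely zero, let a, b be real numbers with a ≠ 0 and b ≠ 0, and let J denote the all-ones matrix of the same size. Then rank(aM + bJ) = rank(M) + 1. -/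
/-!
Write `b J = v wᵀ` with `v = (b, …, b)` and `w = (1, …, 1)`, and put `M' = a M`, which has the
rank of `M`. Column `0` of `M' + v wᵀ` is `v`, because column `0` of `M` vanishes, so the column
space of `M' + v wᵀ` is the column space of `M'` plus the line through `v`. That line is new:
every column of `M'` has first entry `0`, because row `0` of `M` vanishes, while `v₀ = b ≠ 0`.
-/

open Matrix Submodule

section RankOneUpdate

variable {K m n : Type*} [Field K]

lemma span_cols_add_vecMulVec {M : Matrix m n K} {v : m → K} {w : n → K} {j : n}
    (hMj : M.col j = 0) (hwj : w j ≠ 0) :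
    span K (Set.range (M + vecMulVec v w).col) = span K (Set.range M.col) ⊔ span K {v} := by
  have hcol : ∀ k, (M + vecMulVec v w).col k = M.col k + w k • v := by
    intro k; ext i; simp [vecMulVec_apply, mul_comm]
  have hv : v ∈ span K (Set.range (M + vecMulVec v w).col) := by
    have hj : (M + vecMulVec v w).col j ∈ span K (Set.range (M + vecMulVec v w).col) :=
      subset_span ⟨j, rfl⟩
    rwa [hcol, hMj, zero_add, smul_mem_iff _ hwj] at hj
  apply le_antisymm
  · rw [span_le]
    rintro _ ⟨k, rfl⟩
    rw [hcol]
    exact add_mem (mem_sup_left (subset_span ⟨k, rfl⟩))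
      (mem_sup_right (smul_mem _ _ (mem_span_singleton_self v)))
  · refine sup_le (span_le.mpr ?_) (span_singleton_le_iff_mem _ _ |>.mpr hv)
    rintro _ ⟨k, rfl⟩
    have : M.col k = (M + vecMulVec v w).col k - w k • v := by rw [hcol, add_sub_cancel_right]
    rw [SetLike.mem_coe, this]
    exact sub_mem (subset_span ⟨k, rfl⟩) (smul_mem _ _ hv)

theorem rank_add_vecMulVec [Fintype m] [Fintype n] {M : Matrix m n K} {v : m → K} {w : n → K}
    {j : n}
    (hMj : M.col j = 0) (hwj : w j ≠ 0) (hv : v ∉ span K (Set.range M.col)) :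
    (M + vecMulVec v w).rank = M.rank + 1 := by
  rw [rank_eq_finrank_span_cols, rank_eq_finrank_span_cols, span_cols_add_vecMulVec hMj hwj,
    finrank_sup_span_singleton hv]

lemma notMem_span_cols_of_row_eq_zero {M : Matrix m n K} {i : m} (hMi : M i = 0) {v : m → K}
    (hvi : v i ≠ 0) : v ∉ span K (Set.range M.col) := by
  have hle : span K (Set.range M.col) ≤ LinearMap.ker (LinearMap.proj (R := K) i) := by
    rw [span_le]
    rintro _ ⟨k, rfl⟩
    simp [col_apply, hMi]
  exact fun h => hvi (hle h)

end RankOneUpdate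

theorem stmt11 (n : ℕ) (M : Matrix (Fin (n + 1)) (Fin (n + 1)) ℂ)
    (hrow : ∀ j, M 0 j = 0) (hcol : ∀ i, M i 0 = 0)
    (a b : ℝ) (ha : a ≠ 0) (hb : b ≠ 0) :
    ((a : ℂ) • M + (b : ℂ) • Matrix.of (fun _ _ => (1 : ℂ))).rank = M.rank + 1 := by
  have ha' : (a : ℂ) ≠ 0 := by exact_mod_cast ha
  have hb' : (b : ℂ) ≠ 0 := by exact_mod_cast hb
  have hJ : (b : ℂ) • (Matrix.of fun _ _ => 1 : Matrix (Fin (n + 1)) (Fin (n + 1)) ℂ) =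
      vecMulVec (fun _ => (b : ℂ)) (fun _ => 1) := by
    ext; simp [vecMulVec_apply]
  have hcol0 : ((a : ℂ) • M).col 0 = 0 := by ext i; simp [hcol]
  have hrow0 : ((a : ℂ) • M) 0 = 0 := by ext j; simp [hrow]
  rw [hJ, rank_add_vecMulVec hcol0 one_ne_zero (notMem_span_cols_of_row_eq_zero hrow0 hb'),
    rank_smul_of_mem_nonZeroDivisors M (mem_nonZeroDivisors_of_ne_zero ha')]
end
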